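/- Let A = -B be finite subsets of an abelian group G with H = H(A - A) = H(A) a finite subgroup, |A| = (s+1)|H| where t = s|H| + u with s ≥ 1 and 1 ≤ u ≤ |H| - 1. Then Σ_{i=1}^t |A +_i B| = |A|² - (|H| - u)|H| = t|A| + t|B| - t² - u(|H| - u). -/

import Mathlib

open Finset
open scoped Pointwise

def rAB {G : Type*} [AddCommGroup G] [DecidableEq G] (A B : Finset G) (g : G) : ℕ :=
  ((A ×ˢ B).filter (fun p => p.1 + p.2 = g)).card

def popSum {G : Type*} [AddCommGroup G] [DecidableEq G] (A B : Finset G) (i : ℕ) : Finset G :=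
  (A + B).filter (fun g => i ≤ rAB A B g)

/-- The stabilizer `H(A) = {e : e + A = A}` of a finite set, as a set. -/
def stabSet {G : Type*} [AddCommGroup G] [DecidableEq G] (A : Finset G) : Set G :=
  {e : G | A.image (fun a => e + a) = A}

/-!
Since `B = -A`, the representation function is `r(g) = |A ∩ (A + g)|`. The set `A ∩ (A + g)` is a
union of `H`-cosets because `A` is, so if it is a proper subset of `A` it misses a whole coset and
`r(g) ≤ |A| - |H| = s|H| ≤ t`; it is all of `A` exactly when `g ∈ H(A) = H`. Hence
`Σ_{i ≤ t} |A +_i B| = Σ_g min(t, r(g))` counts `t` for each of the `|H|` elements of `H` and `r(g)`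
elsewhere, which totals `|A||B| - |H|(|A| - t)`.
-/

section
variable {G : Type*} [AddCommGroup G] [DecidableEq G]

lemma rAB_eq_card_filter (A B : Finset G) (g : G) : rAB A B g = #{a ∈ A | g - a ∈ B} := by
  refine card_nbij' Prod.fst (fun a => (a, g - a)) ?_ ?_ ?_ fun _ _ => rfl
  · rintro ⟨a, b⟩ hab
    simp only [coe_filter, mem_product, Set.mem_ofPred_eq] at hab ⊢
    exact ⟨hab.1.1, by rw [← hab.2, add_sub_cancel_left]; exact hab.1.2⟩
  · intro a ha
    simp only [coe_filter, mem_product, Set.mem_ofPred_eq] at ha ⊢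
    exact ⟨ha, add_sub_cancel _ _⟩
  · rintro ⟨a, b⟩ hab
    simp only [coe_filter, mem_product, Set.mem_ofPred_eq] at hab
    simp [← hab.2]

lemma mem_add_of_rAB_pos {A B : Finset G} {g : G} (hg : 0 < rAB A B g) : g ∈ A + B := by
  obtain ⟨a, ha⟩ := card_pos.1 ((rAB_eq_card_filter A B g).symm ▸ hg)
  rw [mem_filter] at ha
  simpa using add_mem_add ha.1 ha.2

lemma sum_rAB (A B : Finset G) : ∑ g ∈ A + B, rAB A B g = #A * #B := by
  rw [← card_product]
  exact (card_eq_sum_card_fiberwise fun p hp =>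
    add_mem_add (mem_product.1 hp).1 (mem_product.1 hp).2).symm

lemma sum_card_popSum (A B : Finset G) (t : ℕ) :
    ∑ i ∈ Icc 1 t, #(popSum A B i) = ∑ g ∈ A + B, min t (rAB A B g) := by
  simp only [popSum, card_filter]
  rw [sum_comm]
  refine sum_congr rfl fun g _ => ?_
  have : {i ∈ Icc 1 t | i ≤ rAB A B g} = Icc 1 (min t (rAB A B g)) := by
    ext i
    simp only [mem_filter, mem_Icc]
    omega
  rw [← card_filter, this, Nat.card_Icc, Nat.add_sub_cancel]

lemma rAB_neg_eq_card_filter (A : Finset G) (g : G) : rAB A (-A) g = #{a ∈ A | a - g ∈ A} := by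
  simp only [rAB_eq_card_filter, mem_neg', neg_sub]

lemma mem_stabSet_iff {A : Finset G} {e : G} : e ∈ stabSet A ↔ ∀ a ∈ A, e + a ∈ A := by
  refine ⟨fun he a ha => he ▸ mem_image_of_mem _ ha, fun h => ?_⟩
  exact eq_of_subset_of_card_le (image_subset_iff.2 h)
    (card_image_of_injective _ (add_right_injective e)).ge

lemma card_add_card_le_of_ssubset {H : AddSubgroup G} {Hf S A : Finset G}
    (hHf : ↑Hf = (H : Set G)) (hS : ∀ h ∈ H, ∀ x ∈ S, h + x ∈ S)
    (hA : ∀ h ∈ H, ∀ a ∈ A, h + a ∈ A) (hSA : S ⊂ A) : #S + #Hf ≤ #A := by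
  have hmem (h : G) : h ∈ Hf ↔ h ∈ H := Set.ext_iff.1 hHf h
  obtain ⟨a, haA, haS⟩ := exists_of_ssubset hSA
  have hdisj : Disjoint S (Hf.image (· + a)) := by
    refine disjoint_right.2 ?_
    rintro _ hx hxS
    obtain ⟨h, hh, rfl⟩ := mem_image.1 hx
    exact haS (by simpa using hS (-h) (neg_mem ((hmem h).1 hh)) _ hxS)
  calc #S + #Hf = #(S ∪ Hf.image (· + a)) := by
        rw [card_union_of_disjoint hdisj, card_image_of_injective _ (add_left_injective a)]
    _ ≤ #A := card_le_card <| union_subset hSA.subset <|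
        image_subset_iff.2 fun h hh => hA h ((hmem h).1 hh) a haA

variable {H : AddSubgroup G} {A : Finset G} {g : G}

lemma rAB_neg_of_mem (hA : stabSet A = H) (hg : g ∈ H) : rAB A (-A) g = #A := by
  have hg' : -g ∈ stabSet A := by rw [hA]; exact neg_mem hg
  rw [rAB_neg_eq_card_filter, filter_true_of_mem]
  intro a ha
  rw [sub_eq_neg_add]
  exact mem_stabSet_iff.1 hg' a ha

lemma rAB_neg_add_card_le {Hf : Finset G} (hHf : ↑Hf = (H : Set G)) (hA : stabSet A = H)
    (hg : g ∉ H) : rAB A (-A) g + #Hf ≤ #A := by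
  have hper : ∀ h ∈ H, ∀ a ∈ A, h + a ∈ A := fun h hh =>
    mem_stabSet_iff.1 (by rw [hA]; exact hh)
  rw [rAB_neg_eq_card_filter]
  refine card_add_card_le_of_ssubset hHf ?_ hper ((filter_subset _ _).ssubset_of_ne ?_)
  · intro h hh x hx
    rw [mem_filter] at hx ⊢
    exact ⟨hper h hh x hx.1, by rw [add_sub_assoc]; exact hper h hh _ hx.2⟩
  · intro hfull
    have hg' : -g ∈ stabSet A := mem_stabSet_iff.2 fun a ha => by
      rw [← hfull, mem_filter] at ha
      rw [← sub_eq_neg_add]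
      exact ha.2
    rw [hA] at hg'
    exact hg (neg_mem_iff.1 hg')

lemma sum_min_rAB_neg_add_card_mul {Hf : Finset G} (hHf : ↑Hf = (H : Set G))
    (hA : stabSet A = H) (hne : A.Nonempty) {t : ℕ} (ht₁ : #A ≤ t + #Hf) (ht₂ : t ≤ #A) :
    ∑ g ∈ A + -A, min t (rAB A (-A) g) + #Hf * #A = #Hf * t + #A * #A := by
  have hmem (g : G) : g ∈ Hf ↔ g ∈ H := Set.ext_iff.1 hHf g
  have on_H (g : G) (hg : g ∈ Hf) : rAB A (-A) g = #A := rAB_neg_of_mem hA ((hmem g).1 hg)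
  have hsub : Hf ⊆ A + -A := fun g hg =>
    mem_add_of_rAB_pos (by rw [on_H g hg]; exact hne.card_pos)
  have off_H (g : G) (hg : g ∈ (A + -A) \ Hf) : min t (rAB A (-A) g) = rAB A (-A) g := by
    have := rAB_neg_add_card_le hHf hA (mt (hmem g).2 (mem_sdiff.1 hg).2)
    exact min_eq_right (by omega)
  have hmin : ∑ g ∈ A + -A, min t (rAB A (-A) g) =
      ∑ g ∈ (A + -A) \ Hf, rAB A (-A) g + #Hf * t := by
    rw [← sum_sdiff hsub, sum_congr rfl off_H,
      sum_const_nat (s := Hf) fun g hg => by rw [on_H g hg, min_eq_left ht₂]]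
  have hall : ∑ g ∈ A + -A, rAB A (-A) g =
      ∑ g ∈ (A + -A) \ Hf, rAB A (-A) g + #Hf * #A := by
    rw [← sum_sdiff hsub, sum_const_nat (s := Hf) on_H]
  rw [sum_rAB, card_neg] at hall
  omega

end

theorem neg_example_popSum_general {G : Type*} [AddCommGroup G] [DecidableEq G]
    (H : AddSubgroup G) (Hf : Finset G) (hHf : ↑Hf = (H : Set G))
    (B : Finset G) (A : Finset G) (hAB : A = -B)
    (hstab2 : stabSet A = (H : Set G))
    (s u t : ℕ) (hu2 : u ≤ Hf.card - 1)
    (hcardA : A.card = (s + 1) * Hf.card) (htdef : t = s * Hf.card + u) :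
    (∑ i ∈ Finset.Icc 1 t, ((popSum A B i).card : ℤ)) =
        (A.card : ℤ) ^ 2 - ((Hf.card : ℤ) - u) * Hf.card ∧
      (A.card : ℤ) ^ 2 - ((Hf.card : ℤ) - u) * Hf.card =
        (t : ℤ) * A.card + t * B.card - t ^ 2 - u * ((Hf.card : ℤ) - u) := by
  obtain rfl : B = -A := by rw [hAB, neg_neg]
  have hHf_pos : 0 < #Hf := card_pos.2 ⟨0, by rw [← mem_coe, hHf]; exact H.zero_mem⟩
  have hu : u ≤ #Hf := by omega
  have hcount := sum_min_rAB_neg_add_card_mul hHf hstab2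
    (card_pos.1 (by rw [hcardA]; exact Nat.mul_pos s.succ_pos hHf_pos)) (t := t)
    (by rw [hcardA, htdef]; linarith) (by rw [hcardA, htdef]; linarith)
  rw [← sum_card_popSum, hcardA, htdef] at hcount
  rw [card_neg, hcardA, htdef]
  zify at hcount
  push_cast
  exact ⟨by linear_combination hcount, by ring⟩

/-- For `A = -B` with `H = H(A - A) = H(A)` a finite subgroup, `|A| = (s+1)|H|`
and `t = s|H| + u` with `s ≥ 1`, `1 ≤ u ≤ |H| - 1`, we have
`Σ_{i=1}^t |A +_i B| = |A|² - (|H| - u)|H| = t|A| + t|B| - t² - u(|H| - u)`. -/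
theorem neg_example_popSum {G : Type*} [AddCommGroup G] [DecidableEq G]
    (H : AddSubgroup G) (Hf : Finset G) (hHf : ↑Hf = (H : Set G))
    (B : Finset G) (A : Finset G) (hAB : A = -B)
    (hstab1 : stabSet (A - A) = (H : Set G)) (hstab2 : stabSet A = (H : Set G))
    (s u t : ℕ) (hs : 1 ≤ s) (hu1 : 1 ≤ u) (hu2 : u ≤ Hf.card - 1)
    (hcardA : A.card = (s + 1) * Hf.card) (htdef : t = s * Hf.card + u) :
    (∑ i ∈ Finset.Icc 1 t, ((popSum A B i).card : ℤ)) =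
        (A.card : ℤ) ^ 2 - ((Hf.card : ℤ) - u) * Hf.card ∧
      (A.card : ℤ) ^ 2 - ((Hf.card : ℤ) - u) * Hf.card =
        (t : ℤ) * A.card + t * B.card - t ^ 2 - u * ((Hf.card : ℤ) - u) :=
  neg_example_popSum_general H Hf hHf B A hAB hstab2 s u t hu2 hcardA htdef
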